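/- arXiv:math/0307230 — 4 statements merged into one kernel-verified Lean document; each statement's English description precedes it below -/
import Mathlib

section
/- Let K be a field and let t, x, y ∈ K satisfy x·(x² + 2y + 1) + t·(x² − y²) = 0. Then, setting ξ := t·x and η := t²·y − t·x, one has η² = ξ³ + (t² + 1)·ξ² + t²·ξ. -/
/-- The change of coordinates ξ := t·x, η := t²·y − t·x transforms Beauville's equation
x(x²+2y+1)+t(x²−y²)=0 for Γ₀(4)∩Γ(2) into the Weierstrass form η² = ξ³+(t²+1)ξ²+t²ξ. -/
theorem stmt_0 {K : Type*} [Field K] (t x y : K)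
    (h : x * (x ^ 2 + 2 * y + 1) + t * (x ^ 2 - y ^ 2) = 0) :
    (t ^ 2 * y - t * x) ^ 2 =
      (t * x) ^ 3 + (t ^ 2 + 1) * (t * x) ^ 2 + t ^ 2 * (t * x) := by
  linear_combination (-t^3) * h
end

section
/- Let K be a field, let i ∈ K satisfy i² = −1, and let t, x, y ∈ K with y ≠ 0 satisfy (x + y)·(x·y − 1) − 2·i·t·x·y = 0. Then, setting ξ := x/y and η := (x + y + i·t·x·y)/y², one has η² = ξ³ + (2 − t²)·ξ² + ξ. -/
/-!
With i² = −1 the numerator of η² is (x + y)² + 2itxy(x + y) − t²x²y², and Beauville's equation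
replaces 2itxy by (x + y)(xy − 1); the sum collapses to xy(x + y)² − t²x²y², which is y⁴ times
ξ³ + (2 − t²)ξ² + ξ.
-/

theorem beauville_weierstrass_cleared {R : Type*} [CommRing R] {i t x y : R} (hi : i ^ 2 = -1)
    (h : (x + y) * (x * y - 1) - 2 * i * t * (x * y) = 0) :
    (x + y + i * t * (x * y)) ^ 2 = x ^ 3 * y + (2 - t ^ 2) * x ^ 2 * y ^ 2 + x * y ^ 3 := by
  linear_combination -(x + y) * h + t ^ 2 * x ^ 2 * y ^ 2 * hi

/-- The change of coordinates ξ := x/y, η := (x+y+itxy)/y² transforms Beauville's equation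
(x+y)(xy−1)−2itxy=0 for Γ₀(8) into the Weierstrass form η² = ξ³+(2−t²)ξ²+ξ. -/
theorem stmt_1 {K : Type*} [Field K] (i t x y : K) (hi : i ^ 2 = -1) (hy : y ≠ 0)
    (h : (x + y) * (x * y - 1) - 2 * i * t * (x * y) = 0) :
    ((x + y + i * t * (x * y)) / y ^ 2) ^ 2 =
      (x / y) ^ 3 + (2 - t ^ 2) * (x / y) ^ 2 + x / y := by
  field_simp
  linear_combination beauville_weierstrass_cleared hi h
end

section
/- Let K be a field and let t, x, y ∈ K with x ≠ 0 satisfy x²·y + y² + x + t·x·y = 0. Then, setting ξ := −4/x and η := (8y + 4x² + 4tx)/x², one has η² = ξ³ + t²·ξ² − 8t·ξ + 16. -/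
/-- The change of coordinates ξ := −4/x, η := (8y+4x²+4tx)/x² transforms Beauville's equation
x²y+y²+x+txy=0 for Γ₀(9) into the Weierstrass form η² = ξ³+t²ξ²−8tξ+16. -/
theorem stmt_2 {K : Type*} [Field K] (t x y : K) (hx : x ≠ 0)
    (h : x ^ 2 * y + y ^ 2 + x + t * x * y = 0) :
    ((8 * y + 4 * x ^ 2 + 4 * t * x) / x ^ 2) ^ 2 =
      (-4 / x) ^ 3 + t ^ 2 * (-4 / x) ^ 2 - 8 * t * (-4 / x) + 16 := by
  field_simp
  -- after clearing the denominator x⁴, the two sides differ by 64 times Beauville's equation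
  linear_combination (64 : K) * h
end

section
/- In ℚ[s], let N := (s + 5)·(11s⁴ + 70s³ + 200s² + 250s + 125) and D := 2s·(s⁴ + 50s² + 125). Then there exist a nonzero rational number c and a monic quadratic polynomial q ∈ ℚ[s] with q squarefree such that N² − 11·N·D − D² = c·q⁵. -/
open Polynomial

/-- With N := (s+5)(11s⁴+70s³+200s²+250s+125) and D := 2s(s⁴+50s²+125), one has
N² − 11ND − D² = c·q⁵ for some nonzero c ∈ ℚ and a monic squarefree quadratic q ∈ ℚ[s]:
the quintic cover X(5) → X₁(5) is totally ramified over the roots of t² − 11t − 1. -/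
theorem stmt_12 :
    ∃ (c : ℚ) (q : Polynomial ℚ), c ≠ 0 ∧ q.Monic ∧ q.natDegree = 2 ∧ Squarefree q ∧
      ((X + 5) * (11 * X ^ 4 + 70 * X ^ 3 + 200 * X ^ 2 + 250 * X + 125)) ^ 2 -
          11 * (((X + 5) * (11 * X ^ 4 + 70 * X ^ 3 + 200 * X ^ 2 + 250 * X + 125)) *
            (2 * X * (X ^ 4 + 50 * X ^ 2 + 125))) -
          (2 * X * (X ^ 4 + 50 * X ^ 2 + 125)) ^ 2 = C c * q ^ 5 := by
  have hq : (X ^ 2 - C 5 : ℚ[X]) = X ^ 2 - 5 := by rw [map_ofNat]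
  refine ⟨-125, X ^ 2 - 5, by norm_num, ?_, ?_, ?_, ?_⟩
  · rw [← hq]; exact monic_X_pow_sub_C 5 (by norm_num)
  · rw [← hq]; compute_degree!
  · have hsep : (X ^ 2 - 5 : ℚ[X]).Separable := by
      rw [← hq]
      exact separable_X_pow_sub_C (5 : ℚ) (by norm_num) (by norm_num)
    exact hsep.squarefree
  · have h125 : (C (-125 : ℚ) : ℚ[X]) = -125 := by
      rw [show ((-125 : ℚ)) = -(125 : ℚ) from rfl, C_neg, map_ofNat]
    rw [h125]; ring
end
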